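/- Under Assumption 1.1, there exist M > 0 and R_0 > 1 such that for every (x,ξ) ∈ ℝ^{2n} with |x| > R_0 and ξ ≠ 0, one has H_{p_m}(H_{p_m}(|x|²))(x,ξ) ≥ M|ξ|^{2(m−1)}. -/

import Mathlib

/-!
Write `H = H_{p_m}`. Since `|x|²` does not depend on `ξ`, `H |x|² = 2 x · ∂_ξ p_m`, and applying
`H` once more gives `H² |x|² = 2 |∂_ξ p_m|² + R`, where each term of `R` is a coordinate `x_k`
times a product containing an `x`-derivative of `p_m`. The lower bound on `∂_ξ p_m` in
Assumption 1.1 makes the first term at least `2 C⁻² |ξ|^{2(m-1)}`; the decay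
`|∂_x a_α| ≲ ⟨x⟩^{-μ-1}`, boundedness of the `a_α` and homogeneity in `ξ` give
`|R| ≲ ⟨x⟩^{-μ} |ξ|^{2(m-1)}`, which is at most `C⁻² |ξ|^{2(m-1)}` once `|x|` is large.
-/

open scoped BigOperators Classical FourierTransform RealInnerProductSpace ContDiff
open MeasureTheory Filter

noncomputable section

/-- Euclidean space ℝ^n. -/
abbrev Euc (n : ℕ) := EuclideanSpace ℝ (Fin n)

namespace Paper

/-- total degree `|α|` of a multi-index -/
def mdeg {n : ℕ} (α : Fin n → ℕ) : ℕ := ∑ j, α j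

/-- the finite set of multi-indices of total degree at most `m` -/
def midx (n m : ℕ) : Finset (Fin n → ℕ) :=
  (Finset.univ.image fun f : Fin n → Fin (m + 1) => fun j => ((f j : ℕ))).filter
    fun α => mdeg α ≤ m

/-- monomial `ξ^α` -/
def mono {n : ℕ} (ξ : Euc n) (α : Fin n → ℕ) : ℝ := ∏ j, (ξ j) ^ (α j)

/-- Japanese bracket `⟨x⟩ = (1+|x|²)^{1/2}` -/
def jap {n : ℕ} (x : Euc n) : ℝ := Real.sqrt (1 + ‖x‖ ^ 2)

/-- Japanese bracket of a real number -/
def japR (t : ℝ) : ℝ := Real.sqrt (1 + t ^ 2)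

/-- partial derivative `∂_j` of a real-valued function -/
def pd {n : ℕ} (j : Fin n) (f : Euc n → ℝ) : Euc n → ℝ :=
  fun x => fderiv ℝ f x (EuclideanSpace.single j 1)

/-- iterated partial derivative `∂^α` of a real-valued function -/
def pdI {n : ℕ} (α : Fin n → ℕ) (f : Euc n → ℝ) : Euc n → ℝ :=
  (List.finRange n).foldr (fun j g => (pd j)^[α j] g) f

/-- partial derivative `∂_j` of a complex-valued function -/
def pdC {n : ℕ} (j : Fin n) (f : Euc n → ℂ) : Euc n → ℂ :=
  fun x => fderiv ℝ f x (EuclideanSpace.single j 1)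

/-- iterated partial derivative `∂^α` of a complex-valued function -/
def pdIC {n : ℕ} (α : Fin n → ℕ) (f : Euc n → ℂ) : Euc n → ℂ :=
  (List.finRange n).foldr (fun j g => (pdC j)^[α j] g) f

/-- `D^α = (−i)^{|α|} ∂^α` where `D = -i∂_x` -/
def DOp {n : ℕ} (α : Fin n → ℕ) (f : Euc n → ℂ) : Euc n → ℂ :=
  fun x => (-Complex.I) ^ (mdeg α) * pdIC α f x

/-- product of binomial coefficients of multi-indices: `(α choose β)` -/
def mchoose {n : ℕ} (α β : Fin n → ℕ) : ℕ := ∏ j, (α j).choose (β j)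

/-- The Weyl quantization `P = Op(p)` of the real polynomial symbol
`p(x,ξ) = ∑_{|α| ≤ m} a_α(x) ξ^α`, as a differential operator:
`Pu = ∑_{|α|≤m} 2^{-|α|} ∑_{β ≤ α} (α choose β) D^β (a_α · D^{α-β} u)`. -/
def Pop {n : ℕ} (m : ℕ) (a : (Fin n → ℕ) → Euc n → ℝ) (u : Euc n → ℂ) : Euc n → ℂ :=
  fun x => ∑ α ∈ midx n m, ∑ β ∈ (midx n m).filter (fun β => β ≤ α),
    ((2 : ℂ))⁻¹ ^ (mdeg α) * (mchoose α β : ℂ) *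
      DOp β (fun z => (a α z : ℂ) * DOp (α - β) u z) x

/-- the full symbol `p(x,ξ) = ∑_{|α| ≤ m} a_α(x) ξ^α` -/
def psym {n : ℕ} (m : ℕ) (a : (Fin n → ℕ) → Euc n → ℝ) (x ξ : Euc n) : ℝ :=
  ∑ α ∈ midx n m, a α x * mono ξ α

/-- the principal symbol `p_m(x,ξ) = ∑_{|α| = m} a_α(x) ξ^α` -/
def pPrin {n : ℕ} (m : ℕ) (a : (Fin n → ℕ) → Euc n → ℝ) (x ξ : Euc n) : ℝ :=
  ∑ α ∈ (midx n m).filter (fun α => mdeg α = m), a α x * mono ξ α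

/-- the constant-coefficient model symbol `p_0(ξ) = ∑_{|α| = m} b_α ξ^α` -/
def p0sym {n : ℕ} (m : ℕ) (b : (Fin n → ℕ) → ℝ) (ξ : Euc n) : ℝ :=
  ∑ α ∈ midx n m, b α * mono ξ α

/-- gradient of a real-valued function on Euclidean space -/
def gradE {n : ℕ} (f : Euc n → ℝ) (x : Euc n) : Euc n :=
  (EuclideanSpace.equiv (Fin n) ℝ).symm (fun j => pd j f x)

/-- Assumption 1.1 of the paper: `p` is real principal type with asymptotically
constant coefficients. -/
structure Assumption11 (n m : ℕ) (μ : ℝ) (a : (Fin n → ℕ) → Euc n → ℝ)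
    (b : (Fin n → ℕ) → ℝ) : Prop where
  m_ge : 2 ≤ m
  mu_pos : 0 < μ
  smooth : ∀ α, ContDiff ℝ ∞ (a α)
  bzero : ∀ α : Fin n → ℕ, mdeg α < m → b α = 0
  decay : ∀ α ∈ midx n m, ∀ β : Fin n → ℕ, ∃ C > 0, ∀ x : Euc n,
    |pdI β (fun z => a α z - b α) x| ≤ C * jap x ^ (-(μ + (mdeg β : ℝ)))
  grad_bounds : ∃ C > 0, ∀ x ξ : Euc n,
    (C⁻¹ * ‖ξ‖ ^ (m - 1) ≤ ‖gradE (p0sym m b) ξ‖ ∧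
      ‖gradE (p0sym m b) ξ‖ ≤ C * ‖ξ‖ ^ (m - 1)) ∧
    (C⁻¹ * ‖ξ‖ ^ (m - 1) ≤ ‖gradE (fun ζ => pPrin m a x ζ) ξ‖ ∧
      ‖gradE (fun ζ => pPrin m a x ζ) ξ‖ ≤ C * ‖ξ‖ ^ (m - 1))

/-- `(y, η)` is the (globally defined, C¹) Hamilton flow of the principal symbol `p_m`. -/
structure IsHamFlow {n : ℕ} (m : ℕ) (a : (Fin n → ℕ) → Euc n → ℝ)
    (y η : ℝ → Euc n → Euc n → Euc n) : Prop where
  init_y : ∀ x0 ξ0 : Euc n, y 0 x0 ξ0 = x0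
  init_η : ∀ x0 ξ0 : Euc n, η 0 x0 ξ0 = ξ0
  ode_y : ∀ (t : ℝ) (x0 ξ0 : Euc n),
    HasDerivAt (fun s => y s x0 ξ0)
      (gradE (fun ζ => pPrin m a (y t x0 ξ0) ζ) (η t x0 ξ0)) t
  ode_η : ∀ (t : ℝ) (x0 ξ0 : Euc n),
    HasDerivAt (fun s => η s x0 ξ0)
      (-(gradE (fun w => pPrin m a w (η t x0 ξ0)) (y t x0 ξ0))) t
  c1 : ContDiff ℝ 1 (fun q : ℝ × Euc n × Euc n =>
        (y q.1 q.2.1 q.2.2, η q.1 q.2.1 q.2.2))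

/-- Assumption 1.2: null non-trapping, `|y(t)| → ∞` as `|t| → ∞` on the
characteristic set. -/
def NullNonTrapping {n : ℕ} (m : ℕ) (a : (Fin n → ℕ) → Euc n → ℝ)
    (y : ℝ → Euc n → Euc n → Euc n) : Prop :=
  ∀ x0 ξ0 : Euc n, pPrin m a x0 ξ0 = 0 → ξ0 ≠ 0 →
    Tendsto (fun t : ℝ => ‖y t x0 ξ0‖) atTop atTop ∧
    Tendsto (fun t : ℝ => ‖y t x0 ξ0‖) atBot atTop

/-- a test function: smooth and compactly supported -/
def IsTestFun {n : ℕ} (φ : Euc n → ℂ) : Prop :=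
  ContDiff ℝ ∞ φ ∧ HasCompactSupport φ

/-- `P u = z u + f` in the sense of (tempered) distributions; since `P` is formally
self-adjoint this is expressed by testing against `P φ` for test functions `φ`,
with the pairing `⟨u, φ⟩ = ∫ u · conj φ`. -/
def PEqDistrib {n : ℕ} (m : ℕ) (a : (Fin n → ℕ) → Euc n → ℝ) (z : ℂ)
    (u f : Euc n → ℂ) : Prop :=
  ∀ φ : Euc n → ℂ, IsTestFun φ →
    ∫ x, u x * (starRingEnd ℂ) (Pop m a φ x) =
      z * ∫ x, u x * (starRingEnd ℂ) (φ x) + ∫ x, f x * (starRingEnd ℂ) (φ x)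

/-- the Fourier multiplier `⟨D⟩^s` applied to a (Schwartz-class) function, where
`D = -i ∂` (hence, with Mathlib's `2π`-convention for the Fourier transform, the
symbol is `(1 + (2π)²|ξ|²)^{s/2}`). -/
def japDs {n : ℕ} (s : ℝ) (φ : Euc n → ℂ) : Euc n → ℂ :=
  𝓕⁻ (fun ξ : Euc n => (((1 + (2 * Real.pi) ^ 2 * ‖ξ‖ ^ 2) ^ (s / 2) : ℝ) : ℂ) * 𝓕 φ ξ)

/-- membership in the weighted Sobolev space `H^{s,ℓ}`: `⟨D⟩^s(⟨x⟩^ℓ u) ∈ L²`,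
expressed by duality against Schwartz functions (the transpose of `⟨D⟩^s` is
`⟨D⟩^s` itself since its symbol is even). -/
def MemHsl {n : ℕ} (s ℓ : ℝ) (u : Euc n → ℂ) : Prop :=
  ∃ g : Euc n → ℂ, MemLp g 2 (volume : Measure (Euc n)) ∧
    ∀ φ : SchwartzMap (Euc n) ℂ,
      (∫ x, u x * ((jap x ^ ℓ : ℝ) : ℂ) * japDs s (⇑φ) x) = ∫ x, g x * φ x

/-- partial derivative in the first (`x`) variable of a function on phase space -/
def pdX {n : ℕ} (j : Fin n) (f : Euc n → Euc n → ℝ) : Euc n → Euc n → ℝ :=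
  fun x ξ => fderiv ℝ (fun w => f w ξ) x (EuclideanSpace.single j 1)

/-- partial derivative in the second (`ξ`) variable of a function on phase space -/
def pdXi {n : ℕ} (j : Fin n) (f : Euc n → Euc n → ℝ) : Euc n → Euc n → ℝ :=
  fun x ξ => fderiv ℝ (fun ζ => f x ζ) ξ (EuclideanSpace.single j 1)

/-- iterated `x`-derivative `∂_x^α` on phase space -/
def pdIX {n : ℕ} (α : Fin n → ℕ) (f : Euc n → Euc n → ℝ) : Euc n → Euc n → ℝ :=
  (List.finRange n).foldr (fun j g => (pdX j)^[α j] g) f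

/-- iterated `ξ`-derivative `∂_ξ^β` on phase space -/
def pdIXi {n : ℕ} (β : Fin n → ℕ) (f : Euc n → Euc n → ℝ) : Euc n → Euc n → ℝ :=
  (List.finRange n).foldr (fun j g => (pdXi j)^[β j] g) f

/-- Poisson bracket `{a,f} = ∂_ξ a·∂_x f − ∂_x a·∂_ξ f` (also the Hamilton
derivative `H_a f`). -/
def hamD {n : ℕ} (a f : Euc n → Euc n → ℝ) : Euc n → Euc n → ℝ :=
  fun x ξ => ∑ j, (pdXi j a x ξ * pdX j f x ξ - pdX j a x ξ * pdXi j f x ξ)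

lemma abs_sum_le_card_mul {ι : Type*} (s : Finset ι) (f : ι → ℝ) {c : ℝ}
    (h : ∀ i ∈ s, |f i| ≤ c) : |∑ i ∈ s, f i| ≤ s.card * c :=
  (Finset.abs_sum_le_sum_abs f s).trans (by simpa using Finset.sum_le_card_nsmul s _ c h)

lemma exists_uniform_le_mul {ι X : Type*} (s : Finset ι) {f : ι → X → ℝ} {w : X → ℝ}
    (hw : ∀ x, 0 ≤ w x) (h : ∀ i ∈ s, ∃ C, ∀ x, f i x ≤ C * w x) :
    ∃ C ≥ 0, ∀ i ∈ s, ∀ x, f i x ≤ C * w x := by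
  choose! C hC using h
  obtain ⟨K, hK⟩ := (s.image C).exists_le
  refine ⟨max K 0, le_max_right _ _, fun i hi x => (hC i hi x).trans ?_⟩
  gcongr
  · exact hw x
  · exact (hK _ (Finset.mem_image_of_mem C hi)).trans (le_max_left _ _)

section EuclideanSpace
variable {n : ℕ}

lemma abs_apply_le_norm (x : Euc n) (i : Fin n) : |x i| ≤ ‖x‖ :=
  PiLp.norm_apply_le x i

lemma one_le_jap (x : Euc n) : 1 ≤ jap x :=
  Real.one_le_sqrt.2 (by nlinarith [sq_nonneg ‖x‖])

lemma jap_pos (x : Euc n) : 0 < jap x :=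
  zero_lt_one.trans_le (one_le_jap x)

lemma norm_le_jap (x : Euc n) : ‖x‖ ≤ jap x :=
  Real.le_sqrt_of_sq_le (by linarith)

lemma norm_mul_jap_rpow_le (x : Euc n) (μ : ℝ) :
    ‖x‖ * jap x ^ (-(μ + 1)) ≤ jap x ^ (-μ) := by
  calc ‖x‖ * jap x ^ (-(μ + 1)) ≤ jap x * jap x ^ (-(μ + 1)) :=
        mul_le_mul_of_nonneg_right (norm_le_jap x) (Real.rpow_nonneg (jap_pos x).le _)
    _ = jap x ^ (1 + -(μ + 1)) := by rw [Real.rpow_add (jap_pos x), Real.rpow_one]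
    _ = jap x ^ (-μ) := by ring_nf

lemma exists_mul_jap_rpow_neg_le {μ : ℝ} (hμ : 0 < μ) (K : ℝ) {c : ℝ} (hc : 0 < c) :
    ∃ R > 1, ∀ x : Euc n, R < ‖x‖ → K * jap x ^ (-μ) ≤ c := by
  have hlim : Tendsto (fun t : ℝ => K * t ^ (-μ)) atTop (nhds 0) := by
    simpa using (tendsto_rpow_neg_atTop hμ).const_mul K
  obtain ⟨R, hR⟩ := eventually_atTop.1 (hlim.eventually (ge_mem_nhds hc))
  refine ⟨max R 2, by simp, fun x hx => hR _ ?_⟩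
  exact (le_max_left R 2).trans (hx.le.trans (norm_le_jap x))

end EuclideanSpace

section Monomials
variable {n : ℕ}

lemma le_mdeg (α : Fin n → ℕ) (j : Fin n) : α j ≤ mdeg α :=
  Finset.single_le_sum (fun i _ => Nat.zero_le (α i)) (Finset.mem_univ j)

lemma mdeg_single (j : Fin n) : mdeg (Pi.single j 1) = 1 := by
  simp [mdeg]

lemma mdeg_sub_single {α : Fin n → ℕ} {k : Fin n} (hk : 1 ≤ α k) :
    mdeg (α - Pi.single k 1) = mdeg α - 1 := by
  have hle : (Pi.single k 1 : Fin n → ℕ) ≤ α := by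
    intro i
    rcases eq_or_ne i k with rfl | hik
    · simpa using hk
    · simp [hik]
  have hadd : mdeg α = mdeg (α - Pi.single k 1) + 1 := by
    conv_lhs => rw [← tsub_add_cancel_of_le hle]
    simp [mdeg, Finset.sum_add_distrib]
  omega

lemma abs_mono_le (ξ : Euc n) (α : Fin n → ℕ) : |mono ξ α| ≤ ‖ξ‖ ^ mdeg α := by
  rw [mono, Finset.abs_prod, mdeg, ← Finset.prod_pow_eq_pow_sum]
  gcongr with j
  rw [abs_pow]
  gcongr
  exact abs_apply_le_norm ξ j

lemma mono_sub_single (ξ : Euc n) (α : Fin n → ℕ) (k : Fin n) :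
    mono ξ (α - Pi.single k 1) = ξ k ^ (α k - 1) * ∏ j ∈ Finset.univ.erase k, ξ j ^ α j := by
  rw [mono, ← Finset.mul_prod_erase _ _ (Finset.mem_univ k)]
  congr 1
  · simp
  · refine Finset.prod_congr rfl fun j hj => ?_
    simp [Finset.ne_of_mem_erase hj]

lemma differentiable_mono (α : Fin n → ℕ) : Differentiable ℝ (fun ζ : Euc n => mono ζ α) := by
  unfold mono
  fun_prop

lemma pd_mono (α : Fin n → ℕ) (k : Fin n) (ξ : Euc n) :
    pd k (fun ζ => mono ζ α) ξ = α k * mono ξ (α - Pi.single k 1) := by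
  have hcoord : ∀ i, HasFDerivAt (fun ζ : Euc n => ζ i ^ α i)
      ((α i * ξ i ^ (α i - 1)) • (EuclideanSpace.proj i : Euc n →L[ℝ] ℝ)) ξ := fun i => by
    simpa using (EuclideanSpace.proj i : Euc n →L[ℝ] ℝ).hasFDerivAt.pow (α i)
  have hprod := HasFDerivAt.finsetProd (u := Finset.univ) fun i _ => hcoord i
  rw [pd, show (fun ζ : Euc n => mono ζ α) = fun ζ => ∏ i, ζ i ^ α i from rfl, hprod.fderiv,
    mono_sub_single]
  simp [Finset.sum_ite_eq']
  ring

lemma differentiable_pd_mono (α : Fin n → ℕ) (k : Fin n) :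
    Differentiable ℝ (pd k (fun ζ : Euc n => mono ζ α)) := by
  rw [funext (pd_mono α k)]
  exact (differentiable_mono _).const_mul _

lemma pd_pd_mono (α : Fin n → ℕ) (j k : Fin n) (ξ : Euc n) :
    pd j (pd k (fun ζ => mono ζ α)) ξ = α k * pd j (fun ζ => mono ζ (α - Pi.single k 1)) ξ := by
  rw [funext (pd_mono α k), pd, fderiv_const_mul (differentiable_mono _ ξ)]
  rfl

lemma abs_pd_mono_le (α : Fin n → ℕ) (k : Fin n) (ξ : Euc n) :
    |pd k (fun ζ => mono ζ α) ξ| ≤ mdeg α * ‖ξ‖ ^ (mdeg α - 1) := by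
  rw [pd_mono]
  rcases Nat.eq_zero_or_pos (α k) with hk | hk
  · simp only [hk, Nat.cast_zero, zero_mul, abs_zero]
    positivity
  rw [abs_mul, Nat.abs_cast, ← mdeg_sub_single hk]
  gcongr
  · exact le_mdeg α k
  · exact abs_mono_le ξ _

lemma abs_pd_pd_mono_le (α : Fin n → ℕ) (j k : Fin n) (ξ : Euc n) :
    |pd j (pd k (fun ζ => mono ζ α)) ξ| ≤ mdeg α ^ 2 * ‖ξ‖ ^ (mdeg α - 2) := by
  rw [pd_pd_mono]
  rcases Nat.eq_zero_or_pos (α k) with hk | hk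
  · simp only [hk, Nat.cast_zero, zero_mul, abs_zero]
    positivity
  have hdeg : mdeg α - 2 = mdeg (α - Pi.single k 1) - 1 := by
    rw [mdeg_sub_single hk]
    omega
  rw [abs_mul, Nat.abs_cast, sq, mul_assoc, hdeg]
  gcongr
  · exact le_mdeg α k
  · refine (abs_pd_mono_le _ j ξ).trans ?_
    gcongr
    rw [mdeg_sub_single hk]
    exact Nat.sub_le _ _

end Monomials

section PartialDerivatives
variable {n : ℕ}

lemma pd_sum_mul_const {ι : Type*} (s : Finset ι) (f : ι → Euc n → ℝ) (c : ι → ℝ) (j : Fin n)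
    {x : Euc n} (hf : ∀ i ∈ s, DifferentiableAt ℝ (f i) x) :
    pd j (fun w => ∑ i ∈ s, f i w * c i) x = ∑ i ∈ s, pd j (f i) x * c i := by
  rw [pd, (HasFDerivAt.fun_sum fun i hi => (hf i hi).hasFDerivAt.mul_const (c i)).fderiv]
  simp [pd, mul_comm]

lemma pd_sum_const_mul {ι : Type*} (s : Finset ι) (c : ι → ℝ) (f : ι → Euc n → ℝ) (j : Fin n)
    {x : Euc n} (hf : ∀ i ∈ s, DifferentiableAt ℝ (f i) x) :
    pd j (fun w => ∑ i ∈ s, c i * f i w) x = ∑ i ∈ s, c i * pd j (f i) x := by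
  simpa only [mul_comm (c _)] using pd_sum_mul_const s f c j hf

lemma pd_sub_const (f : Euc n → ℝ) (c : ℝ) (j : Fin n) (x : Euc n) :
    pd j (fun z => f z - c) x = pd j f x := by
  rw [pd, fderiv_sub_const, pd]

lemma pdI_zero (f : Euc n → ℝ) : pdI 0 f = f := by
  simp [pdI]

lemma pdI_single (j : Fin n) (f : Euc n → ℝ) : pdI (Pi.single j 1) f = pd j f := by
  suffices ∀ l : List (Fin n), l.Nodup →
      l.foldr (fun i g => (pd i)^[(Pi.single j 1 : Fin n → ℕ) i] g) f
        = if j ∈ l then pd j f else f from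
    (this _ (List.nodup_finRange n)).trans (if_pos (List.mem_finRange j))
  intro l hl
  induction l with
  | nil => simp
  | cons i t ih =>
    obtain ⟨hit, ht⟩ := List.nodup_cons.mp hl
    rcases eq_or_ne i j with rfl | hij
    · simp [ih ht, hit]
    · simp [ih ht, hij, Ne.symm hij]

end PartialDerivatives

section PhaseSpace
variable {n : ℕ}

lemma pdX_norm_sq (j : Fin n) (x ξ : Euc n) :
    pdX j (fun w (_ : Euc n) => ‖w‖ ^ 2) x ξ = 2 * x j := by
  simp [pdX, EuclideanSpace.inner_single_right]

lemma pdXi_norm_sq (j : Fin n) (x ξ : Euc n) :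
    pdXi j (fun w (_ : Euc n) => ‖w‖ ^ 2) x ξ = 0 := by
  simp [pdXi]

lemma hamD_norm_sq (p : Euc n → Euc n → ℝ) :
    hamD p (fun w _ => ‖w‖ ^ 2) = fun x ξ => ∑ k, 2 * x k * pdXi k p x ξ := by
  ext x ξ
  simp only [hamD, pdX_norm_sq, pdXi_norm_sq]
  exact Finset.sum_congr rfl fun k _ => by ring

lemma pdX_sum_coord_mul (g : Fin n → Euc n → Euc n → ℝ) (j : Fin n) (x ξ : Euc n)
    (hg : ∀ k, DifferentiableAt ℝ (fun w => g k w ξ) x) :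
    pdX j (fun w ζ => ∑ k, 2 * w k * g k w ζ) x ξ
      = 2 * g j x ξ + ∑ k, 2 * x k * pdX j (g k) x ξ := by
  have hterm : ∀ k, HasFDerivAt (fun w : Euc n => 2 * w k * g k w ξ)
      ((2 * x k) • fderiv ℝ (fun w => g k w ξ) x
        + g k x ξ • (2 : ℝ) • (EuclideanSpace.proj k : Euc n →L[ℝ] ℝ)) x := fun k =>
    ((EuclideanSpace.proj k : Euc n →L[ℝ] ℝ).hasFDerivAt.const_mul 2).mul (hg k).hasFDerivAt
  rw [pdX, (HasFDerivAt.fun_sum fun k _ => hterm k).fderiv]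
  simp [pdX, Finset.sum_add_distrib, PiLp.single_apply]
  ring

lemma pdXi_sum_coord_mul (g : Fin n → Euc n → Euc n → ℝ) (j : Fin n) (x ξ : Euc n)
    (hg : ∀ k, DifferentiableAt ℝ (fun ζ => g k x ζ) ξ) :
    pdXi j (fun w ζ => ∑ k, 2 * w k * g k w ζ) x ξ = ∑ k, 2 * x k * pdXi j (g k) x ξ := by
  have hterm : ∀ k, HasFDerivAt (fun ζ : Euc n => 2 * x k * g k x ζ)
      ((2 * x k) • fderiv ℝ (fun ζ => g k x ζ) ξ) ξ := fun k =>
    (hg k).hasFDerivAt.const_mul _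
  rw [pdXi, (HasFDerivAt.fun_sum fun k _ => hterm k).fderiv]
  simp [pdXi]

def mourreRemainder (p : Euc n → Euc n → ℝ) (x ξ : Euc n) : ℝ :=
  ∑ j, ∑ k, 2 * x k *
    (pdXi j p x ξ * pdX j (pdXi k p) x ξ - pdX j p x ξ * pdXi j (pdXi k p) x ξ)

lemma hamD_hamD_norm_sq (p : Euc n → Euc n → ℝ) (x ξ : Euc n)
    (hx : ∀ k, DifferentiableAt ℝ (fun w => pdXi k p w ξ) x)
    (hξ : ∀ k, DifferentiableAt ℝ (fun ζ => pdXi k p x ζ) ξ) :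
    hamD p (hamD p fun w _ => ‖w‖ ^ 2) x ξ
      = 2 * ∑ j, pdXi j p x ξ ^ 2 + mourreRemainder p x ξ := by
  rw [hamD_norm_sq]
  simp only [hamD, pdX_sum_coord_mul _ _ _ _ hx, pdXi_sum_coord_mul _ _ _ _ hξ, mourreRemainder,
    Finset.mul_sum, ← Finset.sum_add_distrib]
  refine Finset.sum_congr rfl fun j _ => ?_
  rw [mul_add, Finset.mul_sum, add_sub_assoc]
  congr 1
  · ring
  · rw [← Finset.sum_sub_distrib]
    exact Finset.sum_congr rfl fun k _ => by ring

lemma abs_mourreRemainder_le {p : Euc n → Euc n → ℝ} {x ξ : Euc n} {G G₂ H₁ H₂ : ℝ}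
    (hG : ∀ j, |pdXi j p x ξ| ≤ G) (hG₂ : ∀ j k, |pdXi j (pdXi k p) x ξ| ≤ G₂)
    (hH₁ : ∀ j k, |pdX j (pdXi k p) x ξ| ≤ H₁) (hH₂ : ∀ j, |pdX j p x ξ| ≤ H₂) :
    |mourreRemainder p x ξ| ≤ n * (n * (2 * ‖x‖ * (G * H₁ + H₂ * G₂))) := by
  have hterm : ∀ j k, |2 * x k *
      (pdXi j p x ξ * pdX j (pdXi k p) x ξ - pdX j p x ξ * pdXi j (pdXi k p) x ξ)|
      ≤ 2 * ‖x‖ * (G * H₁ + H₂ * G₂) := by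
    intro j k
    rw [abs_mul, abs_mul, abs_two]
    gcongr
    · exact abs_apply_le_norm x k
    · refine (abs_sub _ _).trans ?_
      rw [abs_mul, abs_mul]
      gcongr
      · exact (abs_nonneg _).trans (hG j)
      · exact hG j
      · exact hH₁ j k
      · exact (abs_nonneg _).trans (hH₂ j)
      · exact hH₂ j
      · exact hG₂ j k
  simpa [mourreRemainder] using abs_sum_le_card_mul Finset.univ _ fun j _ =>
    abs_sum_le_card_mul Finset.univ _ fun k _ => hterm j k

lemma sq_mul_pow_le_sum_sq_pdXi {p : Euc n → Euc n → ℝ} {x ξ : Euc n} {c : ℝ} {d : ℕ}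
    (hc : 0 ≤ c) (h : c * ‖ξ‖ ^ d ≤ ‖gradE (fun ζ => p x ζ) ξ‖) :
    c ^ 2 * ‖ξ‖ ^ (2 * d) ≤ ∑ j, pdXi j p x ξ ^ 2 :=
  calc c ^ 2 * ‖ξ‖ ^ (2 * d) = (c * ‖ξ‖ ^ d) ^ 2 := by ring
    _ ≤ ‖gradE (fun ζ => p x ζ) ξ‖ ^ 2 := by gcongr
    _ = ∑ j, pdXi j p x ξ ^ 2 := EuclideanSpace.real_norm_sq_eq _

end PhaseSpace

section PrincipalSymbol
variable {n m : ℕ} {a : (Fin n → ℕ) → Euc n → ℝ}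

def prinIdx (n m : ℕ) : Finset (Fin n → ℕ) := (midx n m).filter fun α => mdeg α = m

lemma mem_midx_of_mem_prinIdx {α : Fin n → ℕ} (hα : α ∈ prinIdx n m) : α ∈ midx n m :=
  (Finset.mem_filter.1 hα).1

lemma mdeg_of_mem_prinIdx {α : Fin n → ℕ} (hα : α ∈ prinIdx n m) : mdeg α = m :=
  (Finset.mem_filter.1 hα).2

lemma pdXi_pPrin (k : Fin n) (x ξ : Euc n) :
    pdXi k (pPrin m a) x ξ = ∑ α ∈ prinIdx n m, a α x * pd k (fun ζ => mono ζ α) ξ :=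
  pd_sum_const_mul _ _ _ k fun α _ => differentiable_mono α ξ

lemma pdX_pPrin {x : Euc n} (ha : ∀ α, DifferentiableAt ℝ (a α) x) (j : Fin n) (ξ : Euc n) :
    pdX j (pPrin m a) x ξ = ∑ α ∈ prinIdx n m, pd j (a α) x * mono ξ α :=
  pd_sum_mul_const _ _ _ j fun α _ => ha α

lemma pdX_pdXi_pPrin {x : Euc n} (ha : ∀ α, DifferentiableAt ℝ (a α) x) (j k : Fin n)
    (ξ : Euc n) :
    pdX j (pdXi k (pPrin m a)) x ξ
      = ∑ α ∈ prinIdx n m, pd j (a α) x * pd k (fun ζ => mono ζ α) ξ := by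
  change pd j (fun w => pdXi k (pPrin m a) w ξ) x = _
  simp only [pdXi_pPrin]
  exact pd_sum_mul_const _ _ _ j fun α _ => ha α

lemma pdXi_pdXi_pPrin (j k : Fin n) (x ξ : Euc n) :
    pdXi j (pdXi k (pPrin m a)) x ξ
      = ∑ α ∈ prinIdx n m, a α x * pd j (pd k (fun ζ => mono ζ α)) ξ := by
  change pd j (fun ζ => pdXi k (pPrin m a) x ζ) ξ = _
  simp only [pdXi_pPrin]
  exact pd_sum_const_mul _ _ _ j fun α _ => differentiable_pd_mono α k ξ

lemma differentiableAt_pdXi_pPrin_left (ha : ∀ α, Differentiable ℝ (a α)) (k : Fin n)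
    (x ξ : Euc n) : DifferentiableAt ℝ (fun w => pdXi k (pPrin m a) w ξ) x := by
  simp only [pdXi_pPrin]
  exact DifferentiableAt.fun_sum fun α _ => (ha α x).mul_const _

lemma differentiableAt_pdXi_pPrin_right (k : Fin n) (x ξ : Euc n) :
    DifferentiableAt ℝ (fun ζ => pdXi k (pPrin m a) x ζ) ξ := by
  simp only [pdXi_pPrin]
  exact DifferentiableAt.fun_sum fun α _ => (differentiable_pd_mono α k ξ).const_mul _

lemma abs_pdX_pPrin_le {x : Euc n} {B : ℝ} (ha : ∀ α, DifferentiableAt ℝ (a α) x) (j : Fin n)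
    (ξ : Euc n) (hB : ∀ α ∈ prinIdx n m, |pd j (a α) x| ≤ B) :
    |pdX j (pPrin m a) x ξ| ≤ (prinIdx n m).card * (B * ‖ξ‖ ^ m) := by
  rw [pdX_pPrin ha]
  refine abs_sum_le_card_mul _ _ fun α hα => ?_
  rw [abs_mul, ← mdeg_of_mem_prinIdx hα]
  exact mul_le_mul (hB α hα) (abs_mono_le ξ α) (abs_nonneg _) ((abs_nonneg _).trans (hB α hα))

lemma abs_pdX_pdXi_pPrin_le {x : Euc n} {B : ℝ} (ha : ∀ α, DifferentiableAt ℝ (a α) x)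
    (j k : Fin n) (ξ : Euc n) (hB : ∀ α ∈ prinIdx n m, |pd j (a α) x| ≤ B) :
    |pdX j (pdXi k (pPrin m a)) x ξ| ≤ (prinIdx n m).card * (B * (m * ‖ξ‖ ^ (m - 1))) := by
  rw [pdX_pdXi_pPrin ha]
  refine abs_sum_le_card_mul _ _ fun α hα => ?_
  rw [abs_mul, ← mdeg_of_mem_prinIdx hα]
  exact mul_le_mul (hB α hα) (abs_pd_mono_le α k ξ) (abs_nonneg _)
    ((abs_nonneg _).trans (hB α hα))

lemma abs_pdXi_pdXi_pPrin_le {x : Euc n} {A : ℝ} (j k : Fin n) (ξ : Euc n)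
    (hA : ∀ α ∈ prinIdx n m, |a α x| ≤ A) :
    |pdXi j (pdXi k (pPrin m a)) x ξ| ≤ (prinIdx n m).card * (A * (m ^ 2 * ‖ξ‖ ^ (m - 2))) := by
  rw [pdXi_pdXi_pPrin]
  refine abs_sum_le_card_mul _ _ fun α hα => ?_
  rw [abs_mul, ← mdeg_of_mem_prinIdx hα]
  exact mul_le_mul (hA α hα) (abs_pd_pd_mono_le α j k ξ) (abs_nonneg _)
    ((abs_nonneg _).trans (hA α hα))

lemma exists_abs_mourreRemainder_pPrin_le {μ A B C : ℝ} (hm : 2 ≤ m)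
    (ha : ∀ α, Differentiable ℝ (a α)) (hA₀ : 0 ≤ A) (hB₀ : 0 ≤ B) (hC₀ : 0 ≤ C)
    (hA : ∀ α ∈ prinIdx n m, ∀ x, |a α x| ≤ A)
    (hB : ∀ α ∈ prinIdx n m, ∀ j x, |pd j (a α) x| ≤ B * jap x ^ (-(μ + 1)))
    (hC : ∀ j x ξ, |pdXi j (pPrin m a) x ξ| ≤ C * ‖ξ‖ ^ (m - 1)) :
    ∃ K, ∀ x ξ : Euc n,
      |mourreRemainder (pPrin m a) x ξ| ≤ K * jap x ^ (-μ) * ‖ξ‖ ^ (2 * (m - 1)) := by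
  set N : ℝ := ((prinIdx n m).card : ℝ)
  set K : ℝ := n * (n * (2 * (C * (N * (B * m)) + N * B * (N * (A * m ^ 2)))))
  refine ⟨K, fun x ξ => ?_⟩
  have hrem := abs_mourreRemainder_le (hC · x ξ)
    (fun j k => abs_pdXi_pdXi_pPrin_le j k ξ (hA · · x))
    (fun j k => abs_pdX_pdXi_pPrin_le (ha · x) j k ξ (hB · · j x))
    (fun j => abs_pdX_pPrin_le (ha · x) j ξ (hB · · j x))
  have hpow₁ : ‖ξ‖ ^ (m - 1) * ‖ξ‖ ^ (m - 1) = ‖ξ‖ ^ (2 * (m - 1)) := by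
    rw [← pow_add, two_mul]
  have hpow₂ : ‖ξ‖ ^ m * ‖ξ‖ ^ (m - 2) = ‖ξ‖ ^ (2 * (m - 1)) := by
    rw [← pow_add]
    congr 1
    omega
  set w := jap x ^ (-(μ + 1))
  calc |mourreRemainder (pPrin m a) x ξ| ≤ _ := hrem
    _ = K * (‖x‖ * w) * ‖ξ‖ ^ (2 * (m - 1)) := by
      linear_combination (n * n * 2 * ‖x‖ * w * C * N * B * m) * hpow₁
        + (n * n * 2 * ‖x‖ * w * N * N * B * A * m ^ 2) * hpow₂
    _ ≤ K * jap x ^ (-μ) * ‖ξ‖ ^ (2 * (m - 1)) := by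
      gcongr
      exact norm_mul_jap_rpow_le x μ

end PrincipalSymbol

namespace Assumption11
variable {n m : ℕ} {μ : ℝ} {a : (Fin n → ℕ) → Euc n → ℝ} {b : (Fin n → ℕ) → ℝ}

lemma exists_abs_coeff_le (hA : Assumption11 n m μ a b) :
    ∃ A ≥ 0, ∀ α ∈ midx n m, ∀ x, |a α x| ≤ A := by
  obtain ⟨A, hA₀, hbound⟩ := exists_uniform_le_mul (midx n m)
    (f := fun α x => |a α x|) (w := fun _ : Euc n => 1) (fun _ => zero_le_one) fun α hα => by
      obtain ⟨C, hC₀, hC⟩ := hA.decay α hα 0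
      refine ⟨C + |b α|, fun x => ?_⟩
      have hweight : jap x ^ (-(μ + (mdeg (0 : Fin n → ℕ) : ℝ))) ≤ 1 :=
        Real.rpow_le_one_of_one_le_of_nonpos (one_le_jap x) (by simp [mdeg, hA.mu_pos.le])
      have hdecay := (hC x).trans (mul_le_of_le_one_right hC₀.le hweight)
      rw [pdI_zero] at hdecay
      calc |a α x| = |(a α x - b α) + b α| := by rw [sub_add_cancel]
        _ ≤ |a α x - b α| + |b α| := abs_add_le _ _
        _ ≤ (C + |b α|) * 1 := by linarith
  exact ⟨A, hA₀, fun α hα x => by simpa using hbound α hα x⟩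

lemma exists_abs_pd_coeff_le (hA : Assumption11 n m μ a b) :
    ∃ B ≥ 0, ∀ α ∈ midx n m, ∀ j x, |pd j (a α) x| ≤ B * jap x ^ (-(μ + 1)) := by
  obtain ⟨B, hB₀, hbound⟩ := exists_uniform_le_mul (midx n m ×ˢ Finset.univ)
    (f := fun (αj : (Fin n → ℕ) × Fin n) x => |pd αj.2 (a αj.1) x|)
    (w := fun x => jap x ^ (-(μ + 1))) (fun x => Real.rpow_nonneg (jap_pos x).le _)
    fun αj hαj => by
      obtain ⟨C, -, hC⟩ := hA.decay αj.1 (Finset.mem_product.1 hαj).1 (Pi.single αj.2 1)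
      refine ⟨C, fun x => ?_⟩
      simpa [pdI_single, pd_sub_const, mdeg_single] using hC x
  exact ⟨B, hB₀, fun α hα j x => hbound (α, j) (Finset.mem_product.2 ⟨hα, Finset.mem_univ j⟩) x⟩

end Assumption11

theorem classical_mourre_estimate_general
    (n m : ℕ) (μ : ℝ)
    (a : (Fin n → ℕ) → Euc n → ℝ) (b : (Fin n → ℕ) → ℝ)
    (hA : Assumption11 n m μ a b) :
    ∃ M > (0 : ℝ), ∃ R₀ > (1 : ℝ), ∀ x ξ : Euc n, R₀ < ‖x‖ → ξ ≠ 0 →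
      M * ‖ξ‖ ^ (2 * (m - 1)) ≤
        hamD (pPrin m a) (hamD (pPrin m a) (fun w _ => ‖w‖ ^ 2)) x ξ := by
  obtain ⟨C, hC, hgrad⟩ := hA.grad_bounds
  obtain ⟨A, hA₀, hcoeff⟩ := hA.exists_abs_coeff_le
  obtain ⟨B, hB₀, hpd⟩ := hA.exists_abs_pd_coeff_le
  have ha : ∀ α, Differentiable ℝ (a α) := fun α => (hA.smooth α).differentiable (by simp)
  obtain ⟨K, hK⟩ := exists_abs_mourreRemainder_pPrin_le hA.m_ge ha hA₀ hB₀ hC.le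
    (fun α hα => hcoeff α (mem_midx_of_mem_prinIdx hα))
    (fun α hα => hpd α (mem_midx_of_mem_prinIdx hα))
    (fun j x ξ => (abs_apply_le_norm _ j).trans (hgrad x ξ).2.2)
  obtain ⟨R₀, hR₀, hsmall⟩ := exists_mul_jap_rpow_neg_le hA.mu_pos K (c := C⁻¹ ^ 2) (by positivity)
  refine ⟨C⁻¹ ^ 2, by positivity, R₀, hR₀, fun x ξ hx _ => ?_⟩
  have hmain := sq_mul_pow_le_sum_sq_pdXi (inv_nonneg.2 hC.le) (hgrad x ξ).2.1
  have hrem := neg_le_of_abs_le (hK x ξ)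
  have hdecay := mul_le_mul_of_nonneg_right (hsmall x hx) (by positivity : 0 ≤ ‖ξ‖ ^ (2 * (m - 1)))
  rw [hamD_hamD_norm_sq _ x ξ (differentiableAt_pdXi_pPrin_left ha · x ξ)
    (differentiableAt_pdXi_pPrin_right · x ξ)]
  linarith

/-- **Lemma A.1 (Statement 6, classical Mourre estimate).** Under Assumption 1.1,
there exist `M > 0` and `R₀ > 1` such that `H_{p_m}²(|x|²) ≥ M|ξ|^{2(m−1)}`
whenever `|x| > R₀` and `ξ ≠ 0`. -/
theorem classical_mourre_estimate
    (n m : ℕ) (μ : ℝ) (hn : 1 ≤ n)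
    (a : (Fin n → ℕ) → Euc n → ℝ) (b : (Fin n → ℕ) → ℝ)
    (hA : Assumption11 n m μ a b) :
    ∃ M > (0 : ℝ), ∃ R₀ > (1 : ℝ), ∀ x ξ : Euc n, R₀ < ‖x‖ → ξ ≠ 0 →
      M * ‖ξ‖ ^ (2 * (m - 1)) ≤
        hamD (pPrin m a) (hamD (pPrin m a) (fun w _ => ‖w‖ ^ 2)) x ξ :=
  classical_mourre_estimate_general n m μ a b hA

end Paper
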